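/- Let G be a connected multigraph. Then any two distinct λ-atoms of G are disjoint. -/

import Mathlib

/-- A multigraph: multiple edges allowed (recorded as edge multiplicities), no loops. -/
structure Multigraph (V : Type*) where
  mult : V → V → ℕ
  symm : ∀ u v, mult u v = mult v u
  loopless : ∀ v, mult v v = 0

namespace Multigraph

variable {V : Type*}

/-- Adjacency: at least one edge between `u` and `v`. -/
def Adj (G : Multigraph V) (u v : V) : Prop := 0 < G.mult u v

instance (G : Multigraph V) (v : V) : DecidablePred (G.Adj v) :=
  fun u => inferInstanceAs (Decidable (0 < G.mult v u))

/-- Reachability by walks. -/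
def Reachable (G : Multigraph V) : V → V → Prop := Relation.ReflTransGen G.Adj

/-- A multigraph is connected if it is nonempty and every two vertices are joined by a walk. -/
def Connected (G : Multigraph V) : Prop := Nonempty V ∧ ∀ u v, G.Reachable u v

/-- An automorphism of a multigraph: a permutation preserving all edge multiplicities. -/
def Aut (G : Multigraph V) : Type _ :=
  {e : Equiv.Perm V // ∀ u v, G.mult (e u) (e v) = G.mult u v}

/-- A set of edges of `G`, given by sub-multiplicities. -/
structure EdgeSub (G : Multigraph V) where
  f : V → V → ℕ
  symm : ∀ u v, f u v = f v u
  le : ∀ u v, f u v ≤ G.mult u v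

/-- The multigraph obtained by deleting the edge set `F`. -/
def deleteEdges (G : Multigraph V) (F : G.EdgeSub) : Multigraph V where
  mult u v := G.mult u v - F.f u v
  symm u v := by rw [G.symm u v, F.symm u v]
  loopless v := by simp [G.loopless v]

/-- `F` is an edge-cut if removing it disconnects `G`. -/
def IsEdgeCut (G : Multigraph V) (F : G.EdgeSub) : Prop := ¬ (G.deleteEdges F).Connected

/-- `F` is a restricted edge-cut if removing it disconnects `G` and leaves no isolated vertex. -/
def IsRestrictedEdgeCut (G : Multigraph V) (F : G.EdgeSub) : Prop :=
  G.IsEdgeCut F ∧ ∀ v, ∃ u, (G.deleteEdges F).Adj v u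

/-- `G` is bipartite with parts `V₁`, `V₂`. -/
def IsBipartition [DecidableEq V] [Fintype V] (G : Multigraph V) (V₁ V₂ : Finset V) : Prop :=
  Disjoint V₁ V₂ ∧ V₁ ∪ V₂ = Finset.univ ∧ ∀ u v, G.Adj u v → (u ∈ V₁ ↔ v ∈ V₂)

/-- A bipartite multigraph is half-transitive if `Aut G` is transitive on each part. -/
def IsHalfTransitive [DecidableEq V] [Fintype V] (G : Multigraph V) (V₁ V₂ : Finset V) : Prop :=
  G.IsBipartition V₁ V₂ ∧
  (∀ u ∈ V₁, ∀ v ∈ V₁, ∃ e : G.Aut, e.1 u = v) ∧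
  (∀ u ∈ V₂, ∀ v ∈ V₂, ∃ e : G.Aut, e.1 u = v)

/-- An imprimitive block for `Aut G`. -/
def IsImprimitiveBlock [DecidableEq V] (G : Multigraph V) (A : Finset V) [Fintype V] : Prop :=
  A.Nonempty ∧ A ≠ Finset.univ ∧
  ∀ e : G.Aut, A.image e.1 = A ∨ Disjoint (A.image e.1) A

/-- The induced sub-multigraph on a vertex set `S`. -/
def induce (G : Multigraph V) (S : Finset V) : Multigraph {x // x ∈ S} where
  mult a b := G.mult a.1 b.1
  symm a b := G.symm a.1 b.1
  loopless a := G.loopless a.1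

section Fin

variable [Fintype V] [DecidableEq V]

/-- The degree of a vertex (counting multiplicities). -/
def degree (G : Multigraph V) (v : V) : ℕ := ∑ u, G.mult v u

/-- The minimum degree `δ(G)`. -/
noncomputable def minDegree (G : Multigraph V) : ℕ := sInf {n | ∃ v, G.degree v = n}

/-- The maximum edge multiplicity `μ(G)`. -/
def maxMult (G : Multigraph V) : ℕ := Finset.univ.sup fun p : V × V => G.mult p.1 p.2

/-- `d(A)`: the number of edges between `A` and its complement. -/
def cut (G : Multigraph V) (A : Finset V) : ℕ := ∑ u ∈ A, ∑ v ∈ Aᶜ, G.mult u v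

/-- The number of edges in an edge set. -/
def EdgeSub.card {G : Multigraph V} (F : G.EdgeSub) : ℕ := (∑ u, ∑ v, F.f u v) / 2

/-- The edge-boundary `N(A)` of a vertex set `A`, as an edge set. -/
def boundary (G : Multigraph V) (A : Finset V) : G.EdgeSub where
  f u v := if (u ∈ A ∧ v ∉ A) ∨ (v ∈ A ∧ u ∉ A) then G.mult u v else 0
  symm u v := by
    by_cases h1 : u ∈ A <;> by_cases h2 : v ∈ A <;> simp [h1, h2, G.symm u v]
  le u v := by split_ifs <;> simp

/-- The edge-connectivity `λ(G)`. -/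
noncomputable def edgeConn (G : Multigraph V) : ℕ :=
  sInf {n | ∃ F : G.EdgeSub, G.IsEdgeCut F ∧ F.card = n}

/-- The restricted edge-connectivity `λ'(G)`. -/
noncomputable def rEdgeConn (G : Multigraph V) : ℕ :=
  sInf {n | ∃ F : G.EdgeSub, G.IsRestrictedEdgeCut F ∧ F.card = n}

/-- The minimum edge degree `ξ(G) = min {d(u)+d(v)-2μ(uv) : uv ∈ E}`. -/
noncomputable def minEdgeDegree (G : Multigraph V) : ℕ :=
  sInf {n | ∃ u v, G.Adj u v ∧ n = G.degree u + G.degree v - 2 * G.mult u v}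

/-- A `λ`-fragment: a vertex set whose edge-boundary is a minimum edge-cut. -/
def IsFragment (G : Multigraph V) (A : Finset V) : Prop :=
  A.Nonempty ∧ Aᶜ.Nonempty ∧ G.IsEdgeCut (G.boundary A) ∧ G.cut A = G.edgeConn

/-- A `λ`-atom: a `λ`-fragment of minimum cardinality. -/
def IsAtom (G : Multigraph V) (A : Finset V) : Prop :=
  G.IsFragment A ∧ ∀ B : Finset V, G.IsFragment B → A.card ≤ B.card

/-- A strict `λ`-fragment: a `λ`-fragment `C` with `2 ≤ |C| ≤ |V| - 2`. -/
def IsStrictFragment (G : Multigraph V) (A : Finset V) : Prop :=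
  G.IsFragment A ∧ 2 ≤ A.card ∧ A.card ≤ Fintype.card V - 2

/-- A `λ`-superatom: a strict `λ`-fragment of minimum cardinality. -/
def IsSuperAtom (G : Multigraph V) (A : Finset V) : Prop :=
  G.IsStrictFragment A ∧ ∀ B : Finset V, G.IsStrictFragment B → A.card ≤ B.card

/-- A `λ'`-fragment: a vertex set whose edge-boundary is a minimum restricted edge-cut. -/
def IsRFragment (G : Multigraph V) (A : Finset V) : Prop :=
  G.IsRestrictedEdgeCut (G.boundary A) ∧ G.cut A = G.rEdgeConn

/-- A `λ'`-atom: a `λ'`-fragment of minimum cardinality. -/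
def IsRAtom (G : Multigraph V) (A : Finset V) : Prop :=
  G.IsRFragment A ∧ ∀ B : Finset V, G.IsRFragment B → A.card ≤ B.card

/-- `G` is super edge-connected if every minimum edge-cut is the set of all edges
incident with some vertex. -/
def IsSuperEdgeConnected (G : Multigraph V) : Prop :=
  ∀ F : G.EdgeSub, G.IsEdgeCut F → F.card = G.edgeConn →
    ∃ v : V, ∀ u w : V, F.f u w = if u = v ∨ w = v then G.mult u w else 0

end Fin

end Multigraph

variable {V : Type*} [Fintype V] [DecidableEq V]

open Multigraph

/-!
The cut function is posimodular, `d(A \ B) + d(B \ A) ≤ d(A) + d(B)`, as one checks edge by edge.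
If two distinct atoms `A`, `B` meet, they have equal size, so `A \ B` and `B \ A` are nonempty and
miss a common vertex; each therefore has cut at least `λ`, and posimodularity forces
`d(A \ B) = λ`. Then `A \ B` is a fragment strictly smaller than the atom `A`.
-/

namespace Multigraph

lemma cut_eq_sum_ite (G : Multigraph V) (S : Finset V) :
    G.cut S = ∑ u, ∑ v, if u ∈ S ∧ v ∉ S then G.mult u v else 0 := by
  simp only [cut, ite_and, ← Finset.mem_compl, Finset.sum_ite_mem, Finset.sum_ite_irrel,
    Finset.sum_const_zero, Finset.univ_inter]

lemma sum_boundary_eq_two_mul_cut (G : Multigraph V) (S : Finset V) :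
    ∑ u, ∑ v, (G.boundary S).f u v = 2 * G.cut S := by
  have boundary_eq_add : ∀ u v, (G.boundary S).f u v =
      (if u ∈ S ∧ v ∉ S then G.mult u v else 0) + (if v ∈ S ∧ u ∉ S then G.mult v u else 0) := by
    intro u v
    by_cases hu : u ∈ S <;> by_cases hv : v ∈ S <;> simp [boundary, hu, hv, G.symm u v]
  simp only [boundary_eq_add, Finset.sum_add_distrib]
  rw [Finset.sum_comm (f := fun u v => if v ∈ S ∧ u ∉ S then G.mult v u else 0),
    ← cut_eq_sum_ite, two_mul]

lemma card_boundary (G : Multigraph V) (S : Finset V) : (G.boundary S).card = G.cut S := by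
  rw [EdgeSub.card, sum_boundary_eq_two_mul_cut]
  omega

theorem cut_sdiff_add_cut_sdiff_le (G : Multigraph V) (A B : Finset V) :
    G.cut (A \ B) + G.cut (B \ A) ≤ G.cut A + G.cut B := by
  suffices 2 * (G.cut (A \ B) + G.cut (B \ A)) ≤ 2 * (G.cut A + G.cut B) by omega
  simp only [mul_add, ← sum_boundary_eq_two_mul_cut, ← Finset.sum_add_distrib]
  refine Finset.sum_le_sum fun u _ => Finset.sum_le_sum fun v _ => ?_
  by_cases h1 : u ∈ A <;> by_cases h2 : u ∈ B <;> by_cases h3 : v ∈ A <;>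
    by_cases h4 : v ∈ B <;> simp [boundary, h1, h2, h3, h4]

theorem isEdgeCut_boundary (G : Multigraph V) {S : Finset V} (hS : S.Nonempty)
    (hSc : Sᶜ.Nonempty) : G.IsEdgeCut (G.boundary S) := by
  have mem_iff_of_reachable {a b : V} (h : (G.deleteEdges (G.boundary S)).Reachable a b) :
      a ∈ S ↔ b ∈ S := by
    induction h with
    | refl => rfl
    | tail _ hadj ih =>
      refine ih.trans ?_
      change 0 < G.mult _ _ - (G.boundary S).f _ _ at hadj
      grind [boundary]
  rintro ⟨-, hreach⟩
  obtain ⟨u, hu⟩ := hS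
  obtain ⟨v, hv⟩ := hSc
  exact Finset.mem_compl.1 hv ((mem_iff_of_reachable (hreach u v)).1 hu)

theorem edgeConn_le_cut (G : Multigraph V) {S : Finset V} (hS : S.Nonempty)
    (hSc : Sᶜ.Nonempty) : G.edgeConn ≤ G.cut S :=
  Nat.sInf_le ⟨G.boundary S, G.isEdgeCut_boundary hS hSc, G.card_boundary S⟩

theorem IsFragment.sdiff {G : Multigraph V} {A B : Finset V} (hA : G.IsFragment A)
    (hB : G.IsFragment B) (hAB : (A \ B).Nonempty) (hBA : (B \ A).Nonempty)
    (hAiB : (A ∩ B).Nonempty) : G.IsFragment (A \ B) := by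
  obtain ⟨x, hx⟩ := hAiB
  have hABc : (A \ B)ᶜ.Nonempty := ⟨x, by simp_all⟩
  have hBAc : (B \ A)ᶜ.Nonempty := ⟨x, by simp_all⟩
  have hcutAB := G.edgeConn_le_cut hAB hABc
  have hcutBA := G.edgeConn_le_cut hBA hBAc
  have hposimodular := G.cut_sdiff_add_cut_sdiff_le A B
  have hcutA := hA.2.2.2
  have hcutB := hB.2.2.2
  refine ⟨hAB, hABc, G.isEdgeCut_boundary hAB hABc, ?_⟩
  omega

end Multigraph

theorem atoms_disjoint_general (G : Multigraph V) (A B : Finset V)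
    (hA : G.IsAtom A) (hB : G.IsAtom B) (hAB : A ≠ B) :
    Disjoint A B := by
  rw [Finset.disjoint_iff_inter_eq_empty, ← Finset.not_nonempty_iff_eq_empty]
  intro hAiB
  have hcard : A.card = B.card := le_antisymm (hA.2 B hB.1) (hB.2 A hA.1)
  have hAdiff : (A \ B).Nonempty :=
    Finset.sdiff_nonempty.2 fun h => hAB (Finset.eq_of_subset_of_card_le h hcard.ge)
  have hBdiff : (B \ A).Nonempty :=
    Finset.sdiff_nonempty.2 fun h => hAB (Finset.eq_of_subset_of_card_le h hcard.le).symm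
  have hle := hA.2 _ (hA.1.sdiff hB.1 hAdiff hBdiff hAiB)
  have hsplit := Finset.card_sdiff_add_card_inter A B
  have hpos := hAiB.card_pos
  omega

/-- Any two distinct `λ`-atoms of a connected multigraph are disjoint. -/
theorem atoms_disjoint (G : Multigraph V) (hG : G.Connected) (A B : Finset V)
    (hA : G.IsAtom A) (hB : G.IsAtom B) (hAB : A ≠ B) :
    Disjoint A B :=
  atoms_disjoint_general G A B hA hB hAB
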